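/- arXiv:1304.5911 — 3 statements merged into one kernel-verified Lean document; each statement's English description precedes it below -/
import Mathlib

section
/- Let R be a commutative ring and n, d, x, y ∈ R with n·x + d·y = 1. Suppose n·n_c − d·d_c is a unit of R for some n_c, d_c ∈ R with a Bezout relation n_c·x_c + d_c·y_c = 1. Then each of the four elements −p·c/(1−p·c), p/(1−p·c), −c/(1−p·c), 1/(1−p·c), written in terms of the factorizations as n·n_c·u, n·d_c·u, d·n_c·u, d·d_c·u with u = (d·d_c − n·n_c)⁻¹, lies in R. -/
theorem stmt_10 {R : Type*} [CommRing R] [IsDomain R]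
    (n d x y nc dc xc yc : R)
    (hd : d ≠ 0) (hdc : dc ≠ 0)
    (hbez : n * x + d * y = 1) (hbezc : nc * xc + dc * yc = 1)
    (hu : IsUnit (n * nc - d * dc)) :
    letI K := FractionRing R
    let i : R →+* K := algebraMap R K
    let p : K := i n / i d
    let c : K := i nc / i dc
    1 - p * c ≠ 0 ∧
      (∃ r : R, i r = -(p * c) / (1 - p * c)) ∧
      (∃ r : R, i r = p / (1 - p * c)) ∧
      (∃ r : R, i r = -c / (1 - p * c)) ∧
      (∃ r : R, i r = 1 / (1 - p * c)) := by
  intro i p c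
  obtain ⟨u, huu⟩ := hu
  set v : R := ((u⁻¹ : Rˣ) : R) with hv
  have hv1 : (n * nc - d * dc) * v = 1 := by
    rw [hv, ← huu]; exact u.mul_inv
  have hinj : Function.Injective i := IsFractionRing.injective R (FractionRing R)
  have hid : i d ≠ 0 := fun h => hd (hinj (by simpa using h))
  have hidc : i dc ≠ 0 := fun h => hdc (hinj (by simpa using h))
  have hwne : (n * nc - d * dc) ≠ 0 := by
    intro h
    have : (0 : R) = 1 := by rw [← hv1, h, zero_mul]
    exact one_ne_zero this.symm
  have hiw : i n * i nc - i d * i dc ≠ 0 := by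
    intro h
    apply hwne
    apply hinj
    rw [map_sub, map_mul, map_mul, h, map_zero]
  have hvK : (i n * i nc - i d * i dc) * i v = 1 := by
    rw [← map_mul i, ← map_mul i, ← map_sub, ← map_mul, hv1, map_one]
  have hiw' : i d * i dc - i n * i nc ≠ 0 := fun h => hiw (by
    rw [sub_eq_zero] at h ⊢; exact h.symm)
  have h2 : (1 : FractionRing R) - p * c = (i d * i dc - i n * i nc) / (i d * i dc) := by
    simp only [p, c]
    field_simp
  have h1 : 1 - p * c ≠ 0 := by
    simp only [p, c]
    rw [div_mul_div_comm, sub_ne_zero]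
    intro h
    have := (div_eq_one_iff_eq (by exact mul_ne_zero hid hidc)).mp h.symm
    exact hiw (by rw [this]; ring)
  refine ⟨h1, ⟨n * nc * v, ?_⟩, ⟨-(n * dc * v), ?_⟩, ⟨d * nc * v, ?_⟩, ⟨-(d * dc * v), ?_⟩⟩
  · rw [h2]; simp only [p, c, map_mul, map_neg]
    rw [div_div_eq_mul_div, eq_div_iff hiw']
    field_simp
    linear_combination (-(i n * i nc)) * hvK
  · rw [h2]; simp only [p, c, map_mul, map_neg]
    rw [div_div_eq_mul_div, eq_div_iff hiw']
    field_simp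
    linear_combination (i n) * hvK
  · rw [h2]; simp only [p, c, map_mul, map_neg]
    rw [div_div_eq_mul_div, eq_div_iff hiw']
    field_simp
    linear_combination (-(i nc)) * hvK
  · rw [h2]; simp only [p, c, map_mul, map_neg]
    rw [div_div_eq_mul_div, eq_div_iff hiw']
    field_simp
    linear_combination hvK
end

section
/- In the complex functions on the open right half-plane ℂ_{>0}: with n(s) = 1/(1+s), d(s) = (s − e^{−s})/(1+s), x(s) = 1 + e^{−s}, y(s) = 1, one has n·x + d·y = 1 identically, and all four functions are bounded and holomorphic on ℂ_{>0}. -/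
lemma aux_ne (s : ℂ) (hs : 0 < s.re) : (1 : ℂ) + s ≠ 0 := by
  intro h
  have := congrArg Complex.re h
  simp [Complex.add_re] at this
  linarith

lemma aux_abs_ge (s : ℂ) (hs : 0 < s.re) : 1 ≤ ‖1 + s‖ := by
  have h1 : (1 + s).re ≤ ‖1 + s‖ := Complex.re_le_norm _
  simp [Complex.add_re] at h1
  linarith

lemma aux_exp_le (s : ℂ) (hs : 0 < s.re) : ‖Complex.exp (-s)‖ ≤ 1 := by
  rw [Complex.norm_exp]
  simp only [Complex.neg_re]
  exact Real.exp_le_one_iff.mpr (by linarith)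

theorem stmt_16 (n d x y : ℂ → ℂ)
    (hn : ∀ s, n s = 1 / (1 + s))
    (hd : ∀ s, d s = (s - Complex.exp (-s)) / (1 + s))
    (hx : ∀ s, x s = 1 + Complex.exp (-s))
    (hy : ∀ s, y s = 1) :
    (∀ s : ℂ, 0 < s.re → n s * x s + d s * y s = 1) ∧
      (∀ f ∈ ({n, d, x, y} : Set (ℂ → ℂ)),
        DifferentiableOn ℂ f {s : ℂ | 0 < s.re} ∧
          ∃ C : ℝ, ∀ s : ℂ, 0 < s.re → ‖f s‖ ≤ C) := by
  have hden : DifferentiableOn ℂ (fun s : ℂ => 1 + s) {s : ℂ | 0 < s.re} :=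
    (differentiable_const _ |>.add differentiable_id).differentiableOn
  have hne : ∀ s ∈ {s : ℂ | 0 < s.re}, (1 : ℂ) + s ≠ 0 := fun s hs => aux_ne s hs
  constructor
  · intro s hs
    rw [hn, hd, hx, hy]
    have h := aux_ne s hs
    field_simp
    ring

  · intro f hf
    simp only [Set.mem_insert_iff, Set.mem_singleton_iff] at hf
    rcases hf with hf | hf | hf | hf <;> subst hf
    · constructor
      · refine DifferentiableOn.congr ?_ (fun s _ => hn s)
        exact (differentiableOn_const 1).div hden hne
      · refine ⟨1, fun s hs => ?_⟩
        rw [hn, norm_div]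
        simp only [norm_one]
        rw [div_le_one (lt_of_lt_of_le one_pos (aux_abs_ge s hs))]
        exact aux_abs_ge s hs
    · constructor
      · refine DifferentiableOn.congr ?_ (fun s _ => hd s)
        exact ((differentiable_id.sub (Complex.differentiable_exp.comp differentiable_neg)).differentiableOn).div hden hne
      · refine ⟨3, fun s hs => ?_⟩
        rw [hd, norm_div]
        have h1 : 1 ≤ ‖1 + s‖ := aux_abs_ge s hs
        rw [div_le_iff₀ (by linarith)]
        have h2 : ‖s‖ ≤ ‖1 + s‖ + 1 := by
          calc ‖s‖ = ‖(1 + s) - 1‖ := by ring_nf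
          _ ≤ ‖1 + s‖ + ‖(1:ℂ)‖ := norm_sub_le _ _
          _ = ‖1 + s‖ + 1 := by simp
        have h3 : ‖s - Complex.exp (-s)‖ ≤ ‖s‖ + 1 := by
          calc ‖s - Complex.exp (-s)‖ ≤ ‖s‖ + ‖Complex.exp (-s)‖ := norm_sub_le _ _
          _ ≤ ‖s‖ + 1 := by linarith [aux_exp_le s hs]
        nlinarith
    · constructor
      · refine DifferentiableOn.congr ?_ (fun s _ => hx s)
        exact ((differentiable_const 1).add (Complex.differentiable_exp.comp differentiable_neg)).differentiableOn
      · refine ⟨2, fun s hs => ?_⟩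
        rw [hx]
        calc ‖1 + Complex.exp (-s)‖ ≤ ‖(1:ℂ)‖ + ‖Complex.exp (-s)‖ := norm_add_le _ _
        _ ≤ 1 + 1 := by simp [aux_exp_le s hs]
        _ = 2 := by norm_num
    · constructor
      · refine DifferentiableOn.congr ?_ (fun s _ => hy s)
        exact differentiableOn_const 1
      · exact ⟨1, fun s hs => by rw [hy]; simp⟩
end

section
/- The infimum m over s ∈ ℂ with Re s > 0 of f₁(s) = (1 + |s − e^{−s}|²)/|1+s|² is strictly positive, and the supremum M over the same region of |e^{−s}·(conj(s) − e^{−conj(s)})|/|1+s|² is finite. -/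
theorem stmt_17 :
    (0 < ⨅ s : {s : ℂ // 0 < s.re},
        (1 + ‖(s : ℂ) - Complex.exp (-(s : ℂ))‖ ^ 2) /
          ‖1 + (s : ℂ)‖ ^ 2) ∧
      BddAbove (Set.range fun s : {s : ℂ // 0 < s.re} =>
        ‖Complex.exp (-(s : ℂ)) *
            ((starRingEnd ℂ) (s : ℂ) - Complex.exp (-((starRingEnd ℂ) (s : ℂ))))‖ /
          ‖1 + (s : ℂ)‖ ^ 2) := by
  have hne : Nonempty {s : ℂ // 0 < s.re} := ⟨⟨1, by norm_num⟩⟩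
  have key : ∀ s : {s : ℂ // 0 < s.re},
      ‖Complex.exp (-(s : ℂ))‖ ≤ 1 ∧ 1 ≤ ‖1 + (s : ℂ)‖ := by
    intro ⟨s, hs⟩
    constructor
    · rw [Complex.norm_exp]
      exact Real.exp_le_one_iff.2 (by simp; linarith)
    · calc (1 : ℝ) ≤ (1 + s).re := by simp; linarith
        _ ≤ ‖1 + s‖ := Complex.re_le_norm _
  constructor
  · have hlb : ∀ s : {s : ℂ // 0 < s.re},
        (1/5 : ℝ) ≤ (1 + ‖(s : ℂ) - Complex.exp (-(s : ℂ))‖ ^ 2) /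
          ‖1 + (s : ℂ)‖ ^ 2 := by
      intro s
      obtain ⟨he, hb⟩ := key s
      set a := ‖(s : ℂ) - Complex.exp (-(s : ℂ))‖
      set b := ‖1 + (s : ℂ)‖
      set r := ‖(s : ℂ)‖
      have ha0 : 0 ≤ a := norm_nonneg _
      have hr0 : 0 ≤ r := norm_nonneg _
      have h1 : r - 1 ≤ a := by
        have := norm_sub_norm_le (s : ℂ) (Complex.exp (-(s : ℂ)))
        linarith
      have h2 : b ≤ 1 + r := by
        calc b ≤ ‖(1 : ℂ)‖ + ‖(s : ℂ)‖ := norm_add_le _ _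
          _ = 1 + r := by simp; rfl
      have hb0 : (0:ℝ) ≤ b := norm_nonneg _
      rw [le_div_iff₀ (by positivity)]
      rcases le_or_gt r 1 with h | h
      · nlinarith [sq_nonneg a]
      · nlinarith [sq_nonneg (2*r - 3)]
    exact lt_of_lt_of_le (by norm_num) (le_ciInf hlb)
  · refine ⟨3, ?_⟩
    rintro x ⟨s, rfl⟩
    obtain ⟨he, hb⟩ := key s
    simp only
    rw [norm_mul]
    set e := ‖Complex.exp (-(s : ℂ))‖
    set b := ‖1 + (s : ℂ)‖
    set r := ‖(s : ℂ)‖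
    set a := ‖(starRingEnd ℂ) (s : ℂ) - Complex.exp (-((starRingEnd ℂ) (s : ℂ)))‖
    have ha0 : 0 ≤ a := norm_nonneg _
    have he0 : 0 ≤ e := norm_nonneg _
    have hr0 : 0 ≤ r := norm_nonneg _
    have hexp : ‖Complex.exp (-((starRingEnd ℂ) (s : ℂ)))‖ = e := by
      rw [← map_neg, Complex.exp_conj, Complex.norm_conj]
    have h1 : a ≤ r + 1 := by
      calc a ≤ ‖(starRingEnd ℂ) (s : ℂ)‖ +
            ‖Complex.exp (-((starRingEnd ℂ) (s : ℂ)))‖ := by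
              exact norm_sub_le _ _
        _ ≤ r + 1 := by rw [Complex.norm_conj, hexp]; linarith
    have h2 : r - 1 ≤ b := by
      have h := norm_sub_norm_le ((s : ℂ)) (-1)
      rw [sub_neg_eq_add, add_comm] at h
      simpa using h
    rw [div_le_iff₀ (by positivity)]
    nlinarith [mul_nonneg hr0 hr0, sq_nonneg (r - 2)]
end
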